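/- arXiv:1902.06579 — 5 statements merged into one kernel-verified Lean document; each statement's English description precedes it below -/
import Mathlib

section
/- Let A : Z → [0,1] be a conditional distribution function for a probability measure P on Z = X × ℝ, i.e., for each y, A(X,y) = P(Y ≤ y | X) almost surely when (X,Y) ~ P. If for P-almost all x the function y ↦ A(x,y) is continuous, then the probability integral transform A(X,Y) is uniformly distributed on [0,1]. -/
/-!
For almost every `x`, the section `y ↦ A (x, y)` agrees with the conditional CDF `condCDF P x` on
the rationals, and both are right-continuous, so they agree everywhere; in particular
`condCDF P x` is continuous. For a continuous CDF `F` and `α ∈ [0, 1]` the level set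
`{F ≤ α}` is a half-line `Iic t` with `F t = α` (or empty, or everything), so it has
`F`-measure `α`. Disintegrating `P = P.fst ⊗ₘ (condCDF P ·).measure` then gives
`P {A ≤ α} = ∫ α dP.fst = α`.
-/
open MeasureTheory Set Filter Topology ProbabilityTheory

lemma Monotone.exists_setOf_le_eq_Iic {F : ℝ → ℝ} (hmono : Monotone F) (hcont : Continuous F)
    {α : ℝ} (hne : {y | F y ≤ α}.Nonempty) (hbdd : BddAbove {y | F y ≤ α}) :
    ∃ t, F t = α ∧ {y | F y ≤ α} = Iic t := by
  set t := sSup {y | F y ≤ α}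
  have ht : F t ≤ α := (isClosed_le hcont continuous_const).csSup_mem hne hbdd
  refine ⟨t, le_antisymm ht ?_, ?_⟩
  · have hIoi : Ioi t ⊆ {y | α < F y} := fun y hy ↦
      show α < F y from not_le.1 fun h ↦ not_lt_of_ge (le_csSup hbdd h) hy
    exact closure_lt_subset_le continuous_const hcont (closure_mono hIoi (by simp))
  · exact Subset.antisymm (fun y hy ↦ le_csSup hbdd hy) fun y hy ↦ (hmono hy).trans ht

lemma StieltjesFunction.measure_setOf_le_of_continuous {F : StieltjesFunction ℝ}
    (hF0 : Tendsto F atBot (𝓝 0)) (hF1 : Tendsto F atTop (𝓝 1)) (hcont : Continuous F)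
    {α : ℝ} (hα : α ∈ Icc (0 : ℝ) 1) :
    F.measure {y | F y ≤ α} = ENNReal.ofReal α := by
  obtain ⟨hα0, hα1⟩ := hα
  rcases {y | F y ≤ α}.eq_empty_or_nonempty with hS | hS
  · have : α = 0 := by
      refine le_antisymm (not_lt.1 fun hpos ↦ ?_) hα0
      obtain ⟨y, hy⟩ := (hF0.eventually (gt_mem_nhds hpos)).exists
      exact hS.subset (show y ∈ {y | F y ≤ α} from hy.le)
    rw [hS, measure_empty, this, ENNReal.ofReal_zero]
  rcases hα1.eq_or_lt with rfl | hα1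
  · have : {y | F y ≤ 1} = univ := eq_univ_of_forall fun y ↦ F.mono.ge_of_tendsto hF1 y
    rw [this, F.measure_univ hF0 hF1, sub_zero]
  · obtain ⟨N, hN⟩ := (hF1.eventually (lt_mem_nhds hα1)).exists_forall_of_atTop
    have hbdd : BddAbove {y | F y ≤ α} :=
      ⟨N, fun y hy ↦ not_lt.1 fun hNy ↦ not_le_of_gt (hN y hNy.le) hy⟩
    obtain ⟨t, hFt, hS⟩ := F.mono.exists_setOf_le_eq_Iic hcont hS hbdd
    rw [hS, F.measure_Iic hF0, hFt, sub_zero]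

lemma eq_of_eqOn_dense_of_continuousWithinAt_Ici {f g : ℝ → ℝ} {s : Set ℝ} (hs : Dense s)
    (hf : ∀ y, ContinuousWithinAt f (Ici y) y) (hg : ∀ y, ContinuousWithinAt g (Ici y) y)
    (hfg : EqOn f g s) : f = g := by
  funext y
  have hy : y ∈ closure (Ioi y ∩ s) :=
    closure_minimal (hs.open_subset_closure_inter isOpen_Ioi) isClosed_closure
      (by rw [closure_Ioi]; exact mem_Ici.2 le_rfl)
  have := mem_closure_iff_nhdsWithin_neBot.1 hy
  have hsub : Ioi y ∩ s ⊆ Ici y := inter_subset_left.trans Ioi_subset_Ici_self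
  exact tendsto_nhds_unique_of_eventuallyEq ((hf y).mono hsub).tendsto ((hg y).mono hsub).tendsto
    (eventually_nhdsWithin_of_forall fun x hx ↦ hfg hx.2)

lemma MeasureTheory.Measure.ae_of_ae_compProd_fst {α β : Type*} [MeasurableSpace α]
    [MeasurableSpace β] {μ : Measure α} [SFinite μ] {κ : Kernel α β} [IsMarkovKernel κ]
    {p : α → Prop} (h : ∀ᵐ z ∂(μ ⊗ₘ κ), p z.1) : ∀ᵐ a ∂μ, p a := by
  filter_upwards [Measure.ae_ae_of_ae_compProd h] with a ha using eventually_const.1 ha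

/-- `ρ.fst = ρ.map Prod.fst` only controls measurable sets of `α`, so the null set of bad first
coordinates is handled through the disintegration `ρ = ρ.fst ⊗ₘ ρ.condKernel` instead. -/
lemma MeasureTheory.Measure.ae_fst_of_ae {α Ω : Type*} [MeasurableSpace α] [MeasurableSpace Ω]
    [StandardBorelSpace Ω] [Nonempty Ω] {ρ : Measure (α × Ω)} [IsFiniteMeasure ρ] {p : α → Prop}
    (h : ∀ᵐ z ∂ρ, p z.1) : ∀ᵐ a ∂ρ.fst, p a := by
  rw [← ρ.disintegrate ρ.condKernel] at h
  exact ae_of_ae_compProd_fst h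

namespace ProbabilityTheory

variable {X : Type*} [MeasurableSpace X]

noncomputable def condCDFKernel (ρ : Measure (X × ℝ)) : Kernel X ℝ :=
  ⟨fun a ↦ (condCDF ρ a).measure, measurable_measure_condCDF ρ⟩

lemma condCDFKernel_apply (ρ : Measure (X × ℝ)) (a : X) :
    condCDFKernel ρ a = (condCDF ρ a).measure := rfl

instance (ρ : Measure (X × ℝ)) : IsMarkovKernel (condCDFKernel ρ) :=
  ⟨fun a ↦ by rw [condCDFKernel_apply]; infer_instance⟩

instance (ρ : Measure (X × ℝ)) [IsFiniteMeasure ρ] : ρ.IsCondKernel (condCDFKernel ρ) where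
  disintegrate := congrArg (fun κ ↦ κ ()) (compProd_toKernel (isCondKernelCDF_condCDF ρ))

end ProbabilityTheory

theorem probability_integral_transform_uniform_general
    {𝓧 : Type*} [MeasurableSpace 𝓧]
    (P : Measure (𝓧 × ℝ)) [IsProbabilityMeasure P]
    (A : 𝓧 × ℝ → ℝ)
    (hA_meas : Measurable A)
    (hA_cond : ∀ y : ℝ,
      (fun z : 𝓧 × ℝ => A (z.1, y)) =ᵐ[P] fun z => ProbabilityTheory.condCDF P z.1 y)
    (hA_cont : ∀ᵐ z ∂P, Continuous fun y => A (z.1, y)) :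
    ∀ α ∈ Icc (0 : ℝ) 1, P {z | A z ≤ α} = ENNReal.ofReal α := by
  intro α hα
  have hsection : ∀ᵐ x ∂P.fst, (fun y ↦ A (x, y)) = condCDF P x ∧ Continuous (condCDF P x) := by
    refine Measure.ae_fst_of_ae ?_
    filter_upwards [ae_all_iff.2 fun q : ℚ ↦ hA_cond q, hA_cont] with z hrat hcont
    have heq : (fun y ↦ A (z.1, y)) = condCDF P z.1 :=
      eq_of_eqOn_dense_of_continuousWithinAt_Ici Rat.denseRange_cast
        (fun _ ↦ hcont.continuousWithinAt) (condCDF P z.1).right_continuous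
        (by rintro _ ⟨q, rfl⟩; exact hrat q)
    exact ⟨heq, heq ▸ hcont⟩
  calc P {z | A z ≤ α}
      = (P.fst ⊗ₘ condCDFKernel P) {z | A z ≤ α} := by rw [P.disintegrate]
    _ = ∫⁻ x, (condCDF P x).measure {y | A (x, y) ≤ α} ∂P.fst :=
        Measure.compProd_apply (measurableSet_le hA_meas measurable_const)
    _ = ∫⁻ _, ENNReal.ofReal α ∂P.fst := by
        refine lintegral_congr_ae ?_
        filter_upwards [hsection] with x ⟨heq, hcont⟩
        have hA : ∀ y, A (x, y) = condCDF P x y := congrFun heq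
        simp only [hA]
        exact (condCDF P x).measure_setOf_le_of_continuous (tendsto_condCDF_atBot P x)
          (tendsto_condCDF_atTop P x) hcont hα
    _ = ENNReal.ofReal α := by simp

/-- If `A : 𝓧 × ℝ → [0,1]` is a conditional distribution function for a
probability measure `P` on `𝓧 × ℝ` (i.e., for each `y`, `A (x, y)` is a version of
`P(Y ≤ y | X = x)`), and `y ↦ A (x, y)` is continuous for `P`-almost all observations,
then the probability integral transform `A (X, Y)` is uniformly distributed on `[0,1]`. -/
theorem probability_integral_transform_uniform
    {𝓧 : Type*} [MeasurableSpace 𝓧]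
    (P : Measure (𝓧 × ℝ)) [IsProbabilityMeasure P]
    (A : 𝓧 × ℝ → ℝ)
    (hA_meas : Measurable A)
    (hA_range : ∀ z, A z ∈ Icc (0 : ℝ) 1)
    (hA_cond : ∀ y : ℝ,
      (fun z : 𝓧 × ℝ => A (z.1, y)) =ᵐ[P] fun z => ProbabilityTheory.condCDF P z.1 y)
    (hA_cont : ∀ᵐ z ∂P, Continuous fun y => A (z.1, y)) :
    ∀ α ∈ Icc (0 : ℝ) 1, P {z | A z ≤ α} = ENNReal.ofReal α :=
  probability_integral_transform_uniform_general P A hA_meas hA_cond hA_cont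
end

section
/- Let U_1,…,U_n, U, τ be independent with U_1,…,U_n,U IID uniform on [0,1] and τ uniform on [0,1]. Define Q = (1/(n+1))|{i : U_i < U}| + (τ/(n+1))|{i : U_i = U}| + τ/(n+1). Then Q is uniformly distributed on [0,1]: P(Q ≤ α) = α for all α ∈ [0,1]. -/
/-!
Ties have probability zero, and off the ties `Q = (R + τ)/(n+1)` with `R` the rank of `U` among
`U, U_1, …, U_n`. By exchangeability of these `n+1` IID continuous variables, `R` is uniform on
`{0, …, n}`; it is independent of `τ`, so `R + τ` is uniform on `[0, n+1]`.
-/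

open MeasureTheory ProbabilityTheory Set Finset
open scoped ENNReal

section Rank

variable {κ α : Type*} [Fintype κ] [LinearOrder α]

def rankAt (w : κ → α) (j : κ) : ℕ := #{a | w a < w j}

theorem rankAt_lt_card (w : κ → α) (j : κ) : rankAt w j < Fintype.card κ :=
  card_lt_univ_of_notMem (x := j) (by simp)

theorem rankAt_lt_rankAt {w : κ → α} {i j : κ} (h : w i < w j) : rankAt w i < rankAt w j := by
  refine card_lt_card <| (Finset.ssubset_iff_of_subset fun a ha => ?_).2
    ⟨i, by simpa using h, by simp⟩
  rw [mem_filter] at ha ⊢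
  exact ⟨ha.1, ha.2.trans h⟩

theorem rankAt_injective {w : κ → α} (hw : Function.Injective w) :
    Function.Injective (rankAt w) := by
  intro i j hij
  by_contra hne
  rcases (hw.ne hne).lt_or_gt with h | h
  · exact (rankAt_lt_rankAt h).ne hij
  · exact (rankAt_lt_rankAt h).ne' hij

theorem exists_rankAt_eq {w : κ → α} (hw : Function.Injective w) {k : ℕ}
    (hk : k < Fintype.card κ) : ∃ j, rankAt w j = k := by
  have hbij : Function.Bijective
      fun j => (⟨rankAt w j, rankAt_lt_card w j⟩ : Fin (Fintype.card κ)) :=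
    (Fintype.bijective_iff_injective_and_card _).2
      ⟨fun i j h => rankAt_injective hw (Fin.mk.inj_iff.1 h), (Fintype.card_fin _).symm⟩
  obtain ⟨j, hj⟩ := hbij.2 ⟨k, hk⟩
  exact ⟨j, Fin.mk.inj_iff.1 hj⟩

theorem rankAt_comp_equiv {κ' : Type*} [Fintype κ'] (w : κ → α) (e : κ' ≃ κ) (j : κ') :
    rankAt (w ∘ e) j = rankAt w (e j) :=
  card_equiv e (by simp)

theorem measurable_rankAt (j : κ) : Measurable fun w : κ → ℝ => rankAt w j := by
  simp_rw [rankAt, card_filter]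
  exact Finset.measurable_sum _ fun a _ => Measurable.ite
    (measurableSet_lt (measurable_pi_apply a) (measurable_pi_apply j))
    measurable_const measurable_const

end Rank

theorem ProbabilityTheory.IndepFun.measure_eq_eq_zero {Ω α : Type*} [MeasurableSpace Ω]
    [MeasurableSpace α] [MeasurableEq α] {μ : Measure Ω} [IsFiniteMeasure μ] {X Y : Ω → α}
    (hX : Measurable X) (hY : Measurable Y) (hXY : IndepFun X Y μ)
    [NullSingletonClass (μ.map Y)] : μ {ω | X ω = Y ω} = 0 := by
  have hdiag : MeasurableSet {p : α × α | p.1 = p.2} :=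
    measurableSet_eq_fun measurable_fst measurable_snd
  have hslice (x : α) : Prod.mk x ⁻¹' {p : α × α | p.1 = p.2} = {x} := by
    ext
    simp [eq_comm]
  change μ ((fun ω => (X ω, Y ω)) ⁻¹' {p : α × α | p.1 = p.2}) = 0
  rw [← Measure.map_apply (hX.prodMk hY) hdiag,
    (indepFun_iff_map_prod_eq_prod_map_map hX.aemeasurable hY.aemeasurable).1 hXY,
    Measure.prod_apply hdiag]
  simp [hslice]

section ProductMeasure

variable {κ α : Type*} [Fintype κ] [MeasurableSpace α] (ν : Measure α)

theorem measurePreserving_comp_perm [SigmaFinite ν] (e : κ ≃ κ) :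
    MeasurePreserving (fun w : κ → α => w ∘ e) (Measure.pi fun _ => ν) (Measure.pi fun _ => ν) := by
  convert measurePreserving_piCongrLeft (fun _ : κ => ν) e.symm using 1
  ext w b
  simp [MeasurableEquiv.piCongrLeft, Equiv.piCongrLeft]

theorem ae_injective_pi [IsProbabilityMeasure ν] [MeasurableEq α] [NullSingletonClass ν] :
    ∀ᵐ w ∂(Measure.pi fun _ : κ => ν), Function.Injective w := by
  have htie {a b : κ} (hab : a ≠ b) : Measure.pi (fun _ : κ => ν) {w | w a = w b} = 0 := by
    have hind := (iIndepFun_pi (μ := fun _ : κ => ν) (X := fun _ => id)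
      fun _ => aemeasurable_id).indepFun hab
    have : NullSingletonClass ((Measure.pi fun _ : κ => ν).map fun w => w b) := by
      rw [(measurePreserving_eval _ b).map_eq]
      infer_instance
    exact hind.measure_eq_eq_zero (measurable_pi_apply a) (measurable_pi_apply b)
  rw [ae_iff]
  refine measure_mono_null (fun w hw => ?_) (measure_iUnion_null fun a =>
    measure_iUnion_null fun b => measure_iUnion_null fun (hab : a ≠ b) => htie hab)
  simp only [Function.Injective, not_forall, Set.mem_ofPred_eq] at hw
  obtain ⟨a, b, h, hab⟩ := hw
  exact mem_iUnion₂.2 ⟨a, b, mem_iUnion.2 ⟨hab, h⟩⟩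

end ProductMeasure

section RankDistribution

variable {κ : Type*} [Fintype κ] (ν : Measure ℝ)

theorem measure_pi_rankAt_eq_rankAt [SigmaFinite ν] (i j : κ) (k : ℕ) :
    Measure.pi (fun _ : κ => ν) {w | rankAt w i = k} =
      Measure.pi (fun _ : κ => ν) {w | rankAt w j = k} := by
  classical
  have hpre : (fun w : κ → ℝ => w ∘ Equiv.swap i j) ⁻¹' {w | rankAt w i = k} =
      {w | rankAt w j = k} := by
    ext w
    simp [rankAt_comp_equiv]
  rw [← hpre]
  exact ((measurePreserving_comp_perm ν _).measure_preimage
    (measurable_rankAt i (measurableSet_singleton k)).nullMeasurableSet).symm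

/-- Almost surely the ranks are a permutation of `{0, …, card κ - 1}`, so the events
`rankAt w i = k`, `i : κ`, partition the space up to null sets; by exchangeability they are
equiprobable. -/
theorem measure_pi_rankAt_eq [IsProbabilityMeasure ν] [NullSingletonClass ν] (j : κ) {k : ℕ}
    (hk : k < Fintype.card κ) :
    Measure.pi (fun _ : κ => ν) {w | rankAt w j = k} = (Fintype.card κ : ℝ≥0∞)⁻¹ := by
  have hties := ae_iff.1 (ae_injective_pi (κ := κ) ν)
  have hcover : (⋃ i, {w : κ → ℝ | rankAt w i = k}) =ᵐ[Measure.pi fun _ => ν] univ := by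
    refine ae_eq_univ.2 (measure_mono_null ?_ hties)
    exact fun w hw hinj => hw (mem_iUnion.2 (exists_rankAt_eq hinj hk))
  have hdisj : Pairwise (Function.onFun (AEDisjoint (Measure.pi fun _ : κ => ν))
      fun i => {w : κ → ℝ | rankAt w i = k}) := fun i i' hne =>
    measure_mono_null (fun w hw hinj => hne (rankAt_injective hinj (hw.1.trans hw.2.symm))) hties
  have hsum : ∑ i, Measure.pi (fun _ : κ => ν) {w | rankAt w i = k} = 1 := by
    rw [← tsum_fintype (L := .unconditional _), ← measure_iUnion₀ hdisj
      fun i => (measurable_rankAt i (measurableSet_singleton k)).nullMeasurableSet,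
      measure_congr hcover, measure_univ]
  simp_rw [measure_pi_rankAt_eq_rankAt ν _ j, sum_const, card_univ, nsmul_eq_mul] at hsum
  rw [mul_comm] at hsum
  exact ENNReal.eq_inv_of_mul_eq_one_left hsum

end RankDistribution

theorem sum_range_max_zero_min_sub_one {m : ℕ} {β : ℝ} (h0 : 0 ≤ β) (hm : β ≤ m) :
    ∑ k ∈ range m, max 0 (min (β - k) 1) = β := by
  -- the `k`-th summand is the length of `[0, β] ∩ [k, k + 1]`
  induction m with
  | zero =>
    rw [Nat.cast_zero] at hm
    simp [le_antisymm hm h0]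
  | succ m ih =>
    rw [sum_range_succ]
    rcases le_or_gt β m with h | h
    · rw [ih h, max_eq_left (min_le_of_left_le (by linarith)), add_zero]
    · have hone : ∀ k ∈ range m, max 0 (min (β - k) 1) = 1 := fun k hk => by
        have : (k : ℝ) + 1 ≤ m := by exact_mod_cast mem_range.1 hk
        rw [min_eq_right (by linarith), max_eq_right zero_le_one]
      push_cast at hm
      rw [sum_congr rfl hone, sum_const, card_range, nsmul_one,
        min_eq_left (by linarith), max_eq_right (by linarith)]
      ring

theorem volume_restrict_Icc_zero_one_Iic (c : ℝ) :
    volume.restrict (Icc (0 : ℝ) 1) (Iic c) = ENNReal.ofReal (max 0 (min c 1)) := by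
  have hinter : Iic c ∩ Icc 0 1 = Icc 0 (min c 1) := by
    ext x
    simp only [mem_inter_iff, Set.mem_Iic, Set.mem_Icc, le_min_iff]
    tauto
  rw [Measure.restrict_apply measurableSet_Iic, hinter, Real.volume_Icc, sub_zero]
  simp

instance : IsProbabilityMeasure (volume.restrict (Icc (0 : ℝ) 1)) :=
  ⟨by simp⟩

theorem measure_natCast_add_le_of_indepFun {Ω : Type*} [MeasurableSpace Ω] {μ : Measure Ω}
    {R : Ω → ℕ} {T : Ω → ℝ} {m : ℕ} (hR : Measurable R) (hT : Measurable T)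
    (hRT : IndepFun R T μ) (hR_lt : ∀ ω, R ω < m)
    (hR_unif : ∀ k < m, μ (R ⁻¹' {k}) = (m : ℝ≥0∞)⁻¹)
    (hT_unif : μ.map T = volume.restrict (Icc 0 1)) {β : ℝ} (h0 : 0 ≤ β) (hβ : β ≤ m) :
    μ {ω | R ω + T ω ≤ β} = ENNReal.ofReal (β / m) := by
  have hdecomp : {ω | R ω + T ω ≤ β} = ⋃ k ∈ range m, R ⁻¹' {k} ∩ T ⁻¹' Iic (β - k) := by
    ext ω
    simp only [Set.mem_ofPred_eq, mem_iUnion, mem_inter_iff, Set.mem_preimage, mem_singleton_iff,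
      Set.mem_Iic, Finset.mem_range, exists_prop]
    constructor
    · exact fun h => ⟨R ω, hR_lt ω, rfl, by linarith⟩
    · rintro ⟨k, -, rfl, h⟩
      linarith
  have hdisj : Set.PairwiseDisjoint ↑(range m) fun k => R ⁻¹' {k} ∩ T ⁻¹' Iic (β - k) :=
    fun k _ k' _ hne => Set.disjoint_left.2 fun ω h h' => hne (h.1.symm.trans h'.1)
  have hterm : ∀ k ∈ range m, μ (R ⁻¹' {k} ∩ T ⁻¹' Iic (β - k)) =
      ENNReal.ofReal (max 0 (min (β - k) 1) / m) := fun k hk => by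
    have hm : (0 : ℝ) < m := by exact_mod_cast (Nat.zero_le k).trans_lt (mem_range.1 hk)
    rw [hRT.measure_inter_preimage_eq_mul _ _ (measurableSet_singleton k) measurableSet_Iic,
      hR_unif k (mem_range.1 hk), ← Measure.map_apply hT measurableSet_Iic, hT_unif,
      volume_restrict_Icc_zero_one_Iic, ENNReal.ofReal_div_of_pos hm, ENNReal.ofReal_natCast,
      ENNReal.div_eq_inv_mul]
  rw [hdecomp, measure_biUnion_finset hdisj
      fun k _ => (hR (measurableSet_singleton k)).inter (hT measurableSet_Iic),
    sum_congr rfl hterm, ← ENNReal.ofReal_sum_of_nonneg fun k _ => by positivity, ← sum_div,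
    sum_range_max_zero_min_sub_one h0 hβ]

def sampleIndices (n : ℕ) : Finset (Fin n ⊕ Fin 2) := {Sum.inr 1}ᶜ

def testIndex (n : ℕ) : sampleIndices n := ⟨Sum.inr 0, by simp [sampleIndices]⟩

theorem card_sampleIndices (n : ℕ) : Fintype.card (sampleIndices n) = n + 1 := by
  simp [sampleIndices]

theorem smoothedRank_eq_of_injective {n : ℕ} (w : Fin n ⊕ Fin 2 → ℝ) (τ : ℝ)
    (hw : Function.Injective fun a : sampleIndices n => w a) :
    (#{i : Fin n | w (Sum.inl i) < w (Sum.inr 0)} : ℝ) / (n + 1)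
        + τ * (#{i : Fin n | w (Sum.inl i) = w (Sum.inr 0)} : ℝ) / (n + 1) + τ / (n + 1) =
      (rankAt (fun a : sampleIndices n => w a) (testIndex n) + τ) / (n + 1) := by
  have hties : #{i : Fin n | w (Sum.inl i) = w (Sum.inr 0)} = 0 := by
    refine card_eq_zero.2 (filter_eq_empty_iff.2 fun i _ h => ?_)
    exact Sum.inl_ne_inr (congrArg Subtype.val
      (@hw ⟨Sum.inl i, by simp [sampleIndices]⟩ (testIndex n) h))
  have hrank : #{i : Fin n | w (Sum.inl i) < w (Sum.inr 0)} =
      rankAt (fun a : sampleIndices n => w a) (testIndex n) := by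
    refine card_bij (fun i _ => ⟨Sum.inl i, by simp [sampleIndices]⟩)
      (fun i hi => mem_filter.2 ⟨mem_univ _, (mem_filter.1 hi).2⟩)
      (fun i _ j _ h => Sum.inl_injective (congrArg Subtype.val h)) ?_
    rintro ⟨a | a, ha⟩ hlt
    · exact ⟨a, mem_filter.2 ⟨mem_univ _, (mem_filter.1 hlt).2⟩, rfl⟩
    · fin_cases a
      · exact absurd (mem_filter.1 hlt).2 (lt_irrefl _)
      · simp [sampleIndices] at ha
  rw [hties, hrank]
  ring

section Sample

variable {Ω : Type*} {n : ℕ} {V : Fin n ⊕ Fin 2 → Ω → ℝ}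

noncomputable def sampleRank (V : Fin n ⊕ Fin 2 → Ω → ℝ) (ω : Ω) : ℕ :=
  rankAt (fun j : sampleIndices n => V j ω) (testIndex n)

theorem sampleRank_lt (ω : Ω) : sampleRank V ω < n + 1 :=
  card_sampleIndices n ▸ rankAt_lt_card _ _

variable [MeasurableSpace Ω] {μ : Measure Ω}

theorem measurable_sampleRank (hV_meas : ∀ i, Measurable (V i)) : Measurable (sampleRank V) :=
  (measurable_rankAt _).comp (measurable_pi_lambda _ fun j => hV_meas j)

theorem map_sample_eq_pi [IsProbabilityMeasure μ] (hV_meas : ∀ i, Measurable (V i))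
    (hV_indep : iIndepFun V μ) (hV_unif : ∀ i, μ.map (V i) = volume.restrict (Icc (0 : ℝ) 1)) :
    μ.map (fun ω (j : sampleIndices n) => V j ω) =
      Measure.pi fun _ => volume.restrict (Icc 0 1) := by
  rw [iIndepFun.map_fun_eq_pi_map (fun _ => (hV_meas _).aemeasurable)
    (hV_indep.precomp Subtype.val_injective)]
  simp only [hV_unif]

theorem indepFun_sampleRank (hV_meas : ∀ i, Measurable (V i)) (hV_indep : iIndepFun V μ) :
    IndepFun (sampleRank V) (V (Sum.inr 1)) μ :=
  (hV_indep.indepFun_finset (sampleIndices n) {Sum.inr 1} (by simp [sampleIndices]) hV_meas).comp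
    (ψ := fun t : ({Sum.inr 1} : Finset (Fin n ⊕ Fin 2)) → ℝ =>
      t ⟨Sum.inr 1, mem_singleton_self _⟩)
    (measurable_rankAt (testIndex n)) (measurable_pi_apply _)

theorem measure_sampleRank_eq [IsProbabilityMeasure μ] (hV_meas : ∀ i, Measurable (V i))
    (hV_indep : iIndepFun V μ) (hV_unif : ∀ i, μ.map (V i) = volume.restrict (Icc (0 : ℝ) 1))
    {k : ℕ} (hk : k < n + 1) : μ (sampleRank V ⁻¹' {k}) = ((n + 1 : ℕ) : ℝ≥0∞)⁻¹ := by
  rw [← card_sampleIndices] at hk ⊢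
  have := Measure.map_apply (μ := μ) (measurable_pi_lambda _ fun j : sampleIndices n => hV_meas j)
    (measurable_rankAt (testIndex n) (measurableSet_singleton k))
  rw [map_sample_eq_pi hV_meas hV_indep hV_unif] at this
  exact this.symm.trans (measure_pi_rankAt_eq _ _ hk)

theorem ae_smoothedRank_eq [IsProbabilityMeasure μ] (hV_meas : ∀ i, Measurable (V i))
    (hV_indep : iIndepFun V μ) (hV_unif : ∀ i, μ.map (V i) = volume.restrict (Icc (0 : ℝ) 1)) :
    ∀ᵐ ω ∂μ, (#{i : Fin n | V (Sum.inl i) ω < V (Sum.inr 0) ω} : ℝ) / (n + 1)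
        + V (Sum.inr 1) ω * (#{i : Fin n | V (Sum.inl i) ω = V (Sum.inr 0) ω} : ℝ) / (n + 1)
        + V (Sum.inr 1) ω / (n + 1) = (sampleRank V ω + V (Sum.inr 1) ω) / (n + 1) := by
  have hinj := ae_of_ae_map
    (measurable_pi_lambda _ fun j : sampleIndices n => hV_meas j).aemeasurable
    (map_sample_eq_pi hV_meas hV_indep hV_unif ▸ ae_injective_pi _)
  filter_upwards [hinj] with ω hω
  exact smoothedRank_eq_of_injective (fun a => V a ω) _ hω

end Sample

/-- if `U_1,…,U_n, U, τ` are independent with `U_1,…,U_n, U` IID uniform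
on `[0,1]` and `τ` uniform on `[0,1]`, then the smoothed rank
`Q = (|{i : U_i < U}| + τ |{i : U_i = U}| + τ)/(n+1)` is uniform on `[0,1]`. -/
theorem smoothed_rank_uniform
    {Ω : Type*} [MeasurableSpace Ω] (μ : Measure Ω) [IsProbabilityMeasure μ]
    (n : ℕ)
    -- `V (Sum.inl i) = U_i`, `V (Sum.inr 0) = U` (test), `V (Sum.inr 1) = τ`
    (V : Fin n ⊕ Fin 2 → Ω → ℝ)
    (hV_meas : ∀ i, Measurable (V i))
    (hV_indep : iIndepFun V μ)
    (hV_unif : ∀ i, Measure.map (V i) μ = volume.restrict (Icc (0 : ℝ) 1))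
    (Q : Ω → ℝ)
    (hQ : ∀ ω, Q ω =
      ((univ.filter fun i : Fin n => V (Sum.inl i) ω < V (Sum.inr 0) ω).card : ℝ)
          / (n + 1)
        + V (Sum.inr 1) ω *
          ((univ.filter fun i : Fin n => V (Sum.inl i) ω = V (Sum.inr 0) ω).card : ℝ)
          / (n + 1)
        + V (Sum.inr 1) ω / (n + 1)) :
    ∀ α ∈ Icc (0 : ℝ) 1, μ {ω | Q ω ≤ α} = ENNReal.ofReal α := by
  rintro α ⟨hα0, hα1⟩
  have hn : (0 : ℝ) < n + 1 := by positivity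
  calc μ {ω | Q ω ≤ α} = μ {ω | sampleRank V ω + V (Sum.inr 1) ω ≤ α * (n + 1 : ℕ)} := by
        refine measure_congr <| (ae_smoothedRank_eq hV_meas hV_indep hV_unif).mono
          fun ω hω => propext ?_
        change Q ω ≤ α ↔ sampleRank V ω + V (Sum.inr 1) ω ≤ α * (n + 1 : ℕ)
        rw [hQ ω, hω, div_le_iff₀ hn, Nat.cast_succ]
    _ = ENNReal.ofReal α := by
        rw [measure_natCast_add_le_of_indepFun (measurable_sampleRank hV_meas) (hV_meas _)
          (indepFun_sampleRank hV_meas hV_indep) sampleRank_lt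
          (fun k hk => measure_sampleRank_eq hV_meas hV_indep hV_unif hk) (hV_unif _)
          (by positivity) (by push_cast; nlinarith), Nat.cast_succ, mul_div_cancel_right₀ _ hn.ne']
end

section
/- Let α_{m+1},…,α_n, α be exchangeable random variables (e.g., IID) and τ be uniform on [0,1], independent of them. Define p = (1/(n−m+1))|{i : α_i < α}| + (τ/(n−m+1))·(|{i : α_i = α}| + 1). Then P(p ≤ β) = β for every β ∈ [0,1]. -/
/-!
Fix the scores `x ∈ ℝᵏ` and put `s = kβ`. For an index `j` with `L` scores strictly below
`x j` and `G` scores equal to it, the set of tie-breakers `t ∈ [0,1]` with `L + tG ≤ s` has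
length `|[L, L + G] ∩ [0, s]| / G`. The entries tied at a common value `v` all share the
interval `[L_v, L_v + G_v)`, and these intervals tile `[0, k)`, so summing these lengths over all
`j` gives exactly `s`. By exchangeability every index contributes the same expected length, so
the test index contributes `s / k = β`; independence of `τ` identifies `P(p ≤ β)` with that
expectation.
-/

open MeasureTheory ProbabilityTheory Set Finset

theorem volume_restrict_Icc_setOf_add_mul_le {L G s : ℝ} (hG : 0 < G) :
    volume.restrict (Icc 0 1) {t | L + t * G ≤ s} =
      ENNReal.ofReal ((min s (L + G) - min s L) / G) := by
  have hset : {t | L + t * G ≤ s} ∩ Icc 0 1 = Icc 0 (min ((s - L) / G) 1) := by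
    ext t
    simp only [Set.mem_inter_iff, Set.mem_ofPred_eq, Set.mem_Icc, le_min_iff, le_div_iff₀ hG]
    constructor <;> rintro ⟨h₁, h₂, h₃⟩ <;> refine ⟨?_, ?_, ?_⟩ <;> linarith
  have hclamp : (min s (L + G) - min s L) / G = max (min ((s - L) / G) 1) 0 := by
    have : min s (L + G) - min s L = max (min (s - L) G) 0 := by
      simp only [min_def, max_def]; split_ifs <;> linarith
    rw [this, ← div_self hG.ne', min_div_div_right hG.le, ← max_div_div_right hG.le, zero_div]
  rw [Measure.restrict_apply' measurableSet_Icc, hset, Real.volume_Icc, sub_zero, hclamp,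
    ENNReal.ofReal_max, ENNReal.ofReal_zero, _root_.max_zero]

theorem ProbabilityTheory.IndepFun.measure_preimage_eq_lintegral {Ω β γ : Type*}
    [MeasurableSpace Ω] [MeasurableSpace β] [MeasurableSpace γ] {μ : Measure Ω}
    [IsFiniteMeasure μ] {X : Ω → β} {Y : Ω → γ} (h : IndepFun X Y μ) (hX : Measurable X)
    (hY : Measurable Y) {S : Set (β × γ)} (hS : MeasurableSet S) :
    μ ((fun ω => (X ω, Y ω)) ⁻¹' S) = ∫⁻ x, μ.map Y (Prod.mk x ⁻¹' S) ∂μ.map X := by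
  rw [← Measure.map_apply (hX.prodMk hY) hS,
    h.map_prod_eq_prod_map_map hX.aemeasurable hY.aemeasurable, Measure.prod_apply hS]

theorem card_mul_lintegral_eq_lintegral_sum_of_exchangeable {ι β : Type*} [Fintype ι]
    [MeasurableSpace β] {ν : Measure (ι → β)}
    (hν : ∀ σ : Equiv.Perm ι, ν.map (fun x i => x (σ i)) = ν)
    {F : ι → (ι → β) → ENNReal} (hF : ∀ j, Measurable (F j))
    (hFσ : ∀ (σ : Equiv.Perm ι) j x, F j (fun i => x (σ i)) = F (σ j) x) (j : ι) :
    Fintype.card ι * ∫⁻ x, F j x ∂ν = ∫⁻ x, ∑ i, F i x ∂ν := by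
  classical
  have hswap : ∀ i, ∫⁻ x, F i x ∂ν = ∫⁻ x, F j x ∂ν := by
    intro i
    have hT : Measurable fun (x : ι → β) i' => x (Equiv.swap j i i') :=
      measurable_pi_lambda _ fun i' => measurable_pi_apply _
    calc ∫⁻ x, F i x ∂ν = ∫⁻ x, F i x ∂(ν.map fun x i' => x (Equiv.swap j i i')) := by rw [hν]
      _ = ∫⁻ x, F j x ∂ν := by
        rw [lintegral_map (hF i) hT]
        simp only [hFσ, Equiv.swap_apply_right]
  rw [lintegral_finsetSum _ fun i _ => hF i, sum_congr rfl fun i _ => hswap i, sum_const,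
    card_univ, nsmul_eq_mul]

theorem measurable_card_filter {Ω ι : Type*} [MeasurableSpace Ω] [Fintype ι]
    {P : ι → Ω → Prop} [∀ i ω, Decidable (P i ω)] (hP : ∀ i, MeasurableSet {ω | P i ω}) :
    Measurable fun ω => #{i | P i ω} := by
  simp_rw [card_filter]
  exact Finset.measurable_sum _ fun i _ => Measurable.ite (hP i) measurable_const measurable_const

theorem min_sub_min_eq_sum_range (s : ℝ) {a b k : ℕ} (hab : a ≤ b) (hbk : b ≤ k) :
    min s b - min s a =
      ∑ u ∈ range k, if a ≤ u ∧ u < b then min s ((u : ℝ) + 1) - min s u else 0 := by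
  have := sum_Ico_sub (fun u : ℕ => min s (u : ℝ)) hab
  push_cast at this
  rw [← sum_filter, show {u ∈ range k | a ≤ u ∧ u < b} = Finset.Ico a b by ext; simp; omega, this]

namespace SplitConformal

section Counting

variable {ι E : Type*} [Fintype ι] [LinearOrder E] {k : ℕ}

def countLT (x : ι → E) (v : E) : ℕ := #{i | x i < v}

def countLE (x : ι → E) (v : E) : ℕ := #{i | x i ≤ v}

def countEq (x : ι → E) (v : E) : ℕ := #{i | x i = v}

theorem countLE_eq_countLT_add_countEq (x : ι → E) (v : E) :
    countLE x v = countLT x v + countEq x v := by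
  classical
  rw [countLE, countLT, countEq, ← card_union_of_disjoint (disjoint_filter.2 fun _ _ h => h.ne)]
  simp only [← filter_or, le_iff_lt_or_eq]

theorem countEq_pos (x : ι → E) (j : ι) : 0 < countEq x (x j) :=
  card_pos.2 ⟨j, mem_filter.2 ⟨mem_univ j, rfl⟩⟩

theorem countLE_le_card (x : ι → E) (v : E) : countLE x v ≤ Fintype.card ι :=
  card_filter_le _ _

theorem countLE_le_countLT_of_lt (x : ι → E) {v w : E} (h : v < w) :
    countLE x v ≤ countLT x w :=
  card_le_card fun _ hi => mem_filter.2 ⟨mem_univ _, (mem_filter.1 hi).2.trans_lt h⟩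

theorem countLT_comp_perm (x : ι → E) (σ : Equiv.Perm ι) (v : E) :
    countLT (x ∘ σ) v = countLT x v :=
  card_equiv σ (by simp)

theorem countLE_comp_perm (x : ι → E) (σ : Equiv.Perm ι) (v : E) :
    countLE (x ∘ σ) v = countLE x v :=
  card_equiv σ (by simp)

theorem countEq_comp_perm (x : ι → E) (σ : Equiv.Perm ι) (v : E) :
    countEq (x ∘ σ) v = countEq x v :=
  card_equiv σ (by simp)

theorem countLT_snoc_last (y : Fin k → E) (a : E) :
    countLT (Fin.snoc y a : Fin (k + 1) → E) a = #{j | y j < a} := by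
  rw [countLT, card_filter, card_filter, Fin.sum_univ_castSucc]
  simp

theorem countEq_snoc_last (y : Fin k → E) (a : E) :
    countEq (Fin.snoc y a : Fin (k + 1) → E) a = #{j | y j = a} + 1 := by
  rw [countEq, card_filter, card_filter, Fin.sum_univ_castSucc]
  simp

theorem eq_of_countLT_le_of_lt_countLE (x : ι → E) {u : ℕ} {v w : E}
    (hv : countLT x v ≤ u ∧ u < countLE x v) (hw : countLT x w ≤ u ∧ u < countLE x w) :
    w = v := by
  rcases lt_trichotomy w v with h | h | h
  · have := countLE_le_countLT_of_lt x h; omega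
  · exact h
  · have := countLE_le_countLT_of_lt x h; omega

theorem countLT_le_lt_countLE_of_monotone {y : Fin k → E} (hy : Monotone y) (u : Fin k) :
    countLT y (y u) ≤ u ∧ u < countLE y (y u) := by
  constructor
  · calc countLT y (y u) ≤ #(Iio u) :=
          card_le_card fun i hi => mem_Iio.2 (hy.reflect_lt (mem_filter.1 hi).2)
      _ = u := Fin.card_Iio u
  · calc (u : ℕ) < #(Iic u) := by rw [Fin.card_Iic]; omega
      _ ≤ countLE y (y u) := card_le_card fun i hi => mem_filter.2 ⟨mem_univ i, hy (mem_Iic.1 hi)⟩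

theorem exists_countLT_le_lt_countLE (x : Fin k → E) {u : ℕ} (hu : u < k) :
    ∃ j, countLT x (x j) ≤ u ∧ u < countLE x (x j) := by
  refine ⟨Tuple.sort x ⟨u, hu⟩, ?_⟩
  have := countLT_le_lt_countLE_of_monotone (Tuple.monotone_sort x) ⟨u, hu⟩
  rwa [countLT_comp_perm, countLE_comp_perm] at this

theorem sum_ite_inv_countEq_eq_one (x : Fin k → E) {u : ℕ} (hu : u < k) :
    ∑ j, (if countLT x (x j) ≤ u ∧ u < countLE x (x j) then (countEq x (x j) : ℝ)⁻¹ else 0) =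
      1 := by
  obtain ⟨j₀, hj₀⟩ := exists_countLT_le_lt_countLE x hu
  have hiff : ∀ j, (countLT x (x j) ≤ u ∧ u < countLE x (x j)) ↔ x j = x j₀ :=
    fun j => ⟨eq_of_countLT_le_of_lt_countLE x hj₀, fun h => h ▸ hj₀⟩
  calc ∑ j, (if countLT x (x j) ≤ u ∧ u < countLE x (x j) then (countEq x (x j) : ℝ)⁻¹ else 0)
      = ∑ j, if x j = x j₀ then (countEq x (x j₀) : ℝ)⁻¹ else 0 :=
        sum_congr rfl fun j _ => by simp only [hiff]; split_ifs with h <;> simp only [h]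
    _ = countEq x (x j₀) * (countEq x (x j₀) : ℝ)⁻¹ := by
        rw [← sum_filter, sum_const, nsmul_eq_mul]; rfl
    _ = 1 := mul_inv_cancel₀ (Nat.cast_ne_zero.2 (countEq_pos x j₀).ne')

theorem sum_min_sub_min_div_countEq (x : Fin k → E) {s : ℝ} (hs₀ : 0 ≤ s) (hsk : s ≤ k) :
    ∑ j, (min s (countLE x (x j)) - min s (countLT x (x j))) / countEq x (x j) = s := by
  set c : ℕ → ℝ := fun u => min s ((u : ℝ) + 1) - min s u
  calc ∑ j, (min s (countLE x (x j)) - min s (countLT x (x j))) / countEq x (x j)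
      = ∑ j, ∑ u ∈ range k,
          (if countLT x (x j) ≤ u ∧ u < countLE x (x j) then (countEq x (x j) : ℝ)⁻¹ else 0) *
            c u := by
        refine sum_congr rfl fun j _ => ?_
        have hLU : countLT x (x j) ≤ countLE x (x j) := by
          rw [countLE_eq_countLT_add_countEq]; omega
        have hUk : countLE x (x j) ≤ k := (countLE_le_card x _).trans_eq (Fintype.card_fin k)
        rw [min_sub_min_eq_sum_range s hLU hUk, div_eq_mul_inv, sum_mul]
        refine sum_congr rfl fun u _ => ?_
        split_ifs <;> ring
    _ = ∑ u ∈ range k, c u := by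
        rw [sum_comm]
        refine sum_congr rfl fun u hu => ?_
        rw [← sum_mul, sum_ite_inv_countEq_eq_one x (mem_range.1 hu), one_mul]
    _ = s := by
        have := sum_range_sub (fun u => min s (u : ℝ)) k
        push_cast at this
        rw [this, min_eq_left hsk, min_eq_right hs₀, sub_zero]

end Counting

section SmoothedRank

variable {ι : Type*} [Fintype ι]

/-- `k` times the smoothed p-value of `x j` among the `k` entries of `x`, with tie-breaker `t`. -/
noncomputable def smoothedRank (x : ι → ℝ) (j : ι) (t : ℝ) : ℝ :=
  countLT x (x j) + t * countEq x (x j)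

theorem smoothedRank_comp_perm (x : ι → ℝ) (σ : Equiv.Perm ι) (j : ι) (t : ℝ) :
    smoothedRank (x ∘ σ) j t = smoothedRank x (σ j) t := by
  simp only [smoothedRank, Function.comp_apply, countLT_comp_perm, countEq_comp_perm]

theorem measurable_smoothedRank (j : ι) :
    Measurable fun q : (ι → ℝ) × ℝ => smoothedRank q.1 j q.2 := by
  have hcoord : ∀ i, Measurable fun q : (ι → ℝ) × ℝ => q.1 i :=
    fun i => (measurable_pi_apply i).comp measurable_fst
  have hLT := measurable_card_filter fun i => measurableSet_lt (hcoord i) (hcoord j)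
  have hEq := measurable_card_filter fun i => measurableSet_eq_fun (hcoord i) (hcoord j)
  exact (measurable_from_nat.comp hLT).add (measurable_snd.mul (measurable_from_nat.comp hEq))

theorem sum_volume_restrict_smoothedRank_le {k : ℕ} (x : Fin k → ℝ) {s : ℝ} (hs₀ : 0 ≤ s)
    (hsk : s ≤ k) :
    ∑ j, volume.restrict (Icc 0 1) {t | smoothedRank x j t ≤ s} = ENNReal.ofReal s := by
  have hterm : ∀ j, volume.restrict (Icc 0 1) {t | smoothedRank x j t ≤ s} =
      ENNReal.ofReal ((min s (countLE x (x j)) - min s (countLT x (x j))) / countEq x (x j)) := by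
    intro j
    simp only [smoothedRank]
    rw [volume_restrict_Icc_setOf_add_mul_le (Nat.cast_pos.2 (countEq_pos x j)),
      countLE_eq_countLT_add_countEq, Nat.cast_add]
  have hnonneg : ∀ j,
      0 ≤ (min s (countLE x (x j)) - min s (countLT x (x j))) / (countEq x (x j) : ℝ) := by
    intro j
    refine div_nonneg (sub_nonneg.2 (min_le_min_left s (Nat.cast_le.2 ?_))) (Nat.cast_nonneg _)
    rw [countLE_eq_countLT_add_countEq]
    omega
  rw [sum_congr rfl fun j _ => hterm j, ← ENNReal.ofReal_sum_of_nonneg fun j _ => hnonneg j,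
    sum_min_sub_min_div_countEq x hs₀ hsk]

theorem card_mul_measure_smoothedRank_le {Ω : Type*} [MeasurableSpace Ω] {μ : Measure Ω}
    [IsProbabilityMeasure μ] {k : ℕ} {X : Ω → Fin k → ℝ} {τ : Ω → ℝ} (hX : Measurable X)
    (hτ : Measurable τ)
    (h_exch : ∀ σ : Equiv.Perm (Fin k), μ.map (fun ω i => X ω (σ i)) = μ.map X)
    (hτ_unif : μ.map τ = volume.restrict (Icc 0 1)) (hτ_indep : IndepFun X τ μ) (j : Fin k)
    {s : ℝ} (hs₀ : 0 ≤ s) (hsk : s ≤ k) :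
    k * μ {ω | smoothedRank (X ω) j (τ ω) ≤ s} = ENNReal.ofReal s := by
  have hS : ∀ i : Fin k, MeasurableSet {q : (Fin k → ℝ) × ℝ | smoothedRank q.1 i q.2 ≤ s} :=
    fun i => measurableSet_le (measurable_smoothedRank i) measurable_const
  have hν : ∀ σ : Equiv.Perm (Fin k), (μ.map X).map (fun x i => x (σ i)) = μ.map X := fun σ => by
    rw [Measure.map_map (measurable_pi_lambda _ fun i => measurable_pi_apply (σ i)) hX]
    exact h_exch σ
  have := Measure.isProbabilityMeasure_map (μ := μ) hX.aemeasurable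
  calc (k : ENNReal) * μ {ω | smoothedRank (X ω) j (τ ω) ≤ s}
      = k * ∫⁻ x, volume.restrict (Icc 0 1) {t | smoothedRank x j t ≤ s} ∂μ.map X := by
        have h := hτ_indep.measure_preimage_eq_lintegral hX hτ (hS j)
        rw [hτ_unif] at h
        exact congrArg _ h
    _ = ∫⁻ x, ∑ i, volume.restrict (Icc 0 1) {t | smoothedRank x i t ≤ s} ∂μ.map X := by
        simpa only [Fintype.card_fin] using card_mul_lintegral_eq_lintegral_sum_of_exchangeable hν
          (F := fun i x => volume.restrict (Icc 0 1) {t | smoothedRank x i t ≤ s})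
          (fun i => measurable_measure_prodMk_left (hS i))
          (fun σ i x => by simp only [← smoothedRank_comp_perm]; rfl) j
    _ = ENNReal.ofReal s := by
        rw [lintegral_congr fun x => sum_volume_restrict_smoothedRank_le x hs₀ hsk,
          lintegral_const, measure_univ, mul_one]

end SmoothedRank

end SplitConformal

open SplitConformal

/-- calibration in probability of the smoothed split-conformal p-value.
The calibration scores `α_{m+1},…,α_n` together with the test score `α` form an
exchangeable family of `n−m+1` random variables, and `τ` is uniform on `[0,1]`
independent of them; then `p = (|{i : α_i < α}| + τ(|{i : α_i = α}| + 1))/(n−m+1)`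
satisfies `P(p ≤ β) = β` for every `β ∈ [0,1]`. -/
theorem split_conformal_p_value_uniform
    {Ω : Type*} [MeasurableSpace Ω] (μ : Measure Ω) [IsProbabilityMeasure μ]
    (m n : ℕ) (hmn : m < n)
    (α : Fin (n - m) → Ω → ℝ)   -- calibration scores α_{m+1},…,α_n
    (αtest : Ω → ℝ)             -- the test score α
    (τ : Ω → ℝ)
    (hα_meas : ∀ i, Measurable (α i)) (hαtest_meas : Measurable αtest)
    (hτ_meas : Measurable τ)
    -- exchangeability of the combined family of the n−m+1 scores:
    (h_exch : ∀ σ : Equiv.Perm (Fin (n - m + 1)),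
      Measure.map (fun ω => fun i => (Fin.snoc (fun j => α j ω) (αtest ω) : Fin (n - m + 1) → ℝ) (σ i)) μ =
        Measure.map (fun ω => fun i => (Fin.snoc (fun j => α j ω) (αtest ω) : Fin (n - m + 1) → ℝ) i) μ)
    -- τ is uniform on [0,1] and independent of the scores:
    (hτ_unif : Measure.map τ μ = volume.restrict (Icc (0 : ℝ) 1))
    (hτ_indep : IndepFun (fun ω => (Fin.snoc (fun j => α j ω) (αtest ω) : Fin (n - m + 1) → ℝ)) τ μ)
    (p : Ω → ℝ)
    (hp : ∀ ω, p ω = (1 / (n - m + 1 : ℝ)) *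
      (((univ.filter fun i => α i ω < αtest ω).card : ℝ)
        + τ ω * (((univ.filter fun i => α i ω = αtest ω).card : ℝ) + 1))) :
    ∀ β ∈ Icc (0 : ℝ) 1, μ {ω | p ω ≤ β} = ENNReal.ofReal β := by
  rintro β ⟨hβ₀, hβ₁⟩
  set k := n - m + 1
  set X : Ω → (Fin k → ℝ) := fun ω => Fin.snoc (fun j => α j ω) (αtest ω)
  have hX : Measurable X := measurable_pi_iff.2 fun i =>
    Fin.lastCases (by simpa [X] using hαtest_meas) (fun j => by simpa [X] using hα_meas j) i
  have hk : (0 : ℝ) < k := by positivity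
  have hp_le : {ω | p ω ≤ β} = {ω | smoothedRank (X ω) (Fin.last (n - m)) (τ ω) ≤ k * β} := by
    ext ω
    have hk' : (n - m + 1 : ℝ) = k := by simp [k, Nat.cast_sub hmn.le]
    simp only [Set.mem_ofPred_eq, smoothedRank, X, Fin.snoc_last, countLT_snoc_last,
      countEq_snoc_last, hp, hk', one_div, inv_mul_le_iff₀ hk]
    push_cast
    rfl
  have hcal := card_mul_measure_smoothedRank_le hX hτ_meas h_exch hτ_unif hτ_indep
    (Fin.last (n - m)) (by positivity) (mul_le_of_le_one_right hk.le hβ₁)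
  rw [ENNReal.ofReal_mul hk.le, ENNReal.ofReal_natCast] at hcal
  rw [hp_le]
  exact (ENNReal.mul_right_inj (by simp) (by simp)).1 hcal
end

section
/- Let A be a predictive system that never takes the values 0 or 1. Then the split-conformalized predictive system C^A satisfies lim_{y→−∞} C^A(z_1,…,z_n,(x,y),0) = 0 and lim_{y→+∞} C^A(z_1,…,z_n,(x,y),1) = 1 for every training sequence and test object; hence C^A is a randomized predictive system. -/
/-!
The calibration scores are finitely many numbers strictly inside `(0, 1)`, while the test score
`A zs (x, y)` tends to `0` as `y → -∞` and to `1` as `y → +∞`. So eventually the test score lies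
strictly below (resp. above) every calibration score: then `C y 0 = 0 / (k + 1)`, and, with no
ties left, `C y 1 = (k + 0 + 1) / (k + 1) = 1`.
-/

open Set Finset Filter

section Counting

variable {ι α : Type*} [Fintype ι] [LinearOrder α] {a : ι → α} {s : α}

theorem filter_lt_eq_empty_of_forall_lt (h : ∀ i, s < a i) :
    ({i | a i < s} : Finset ι) = ∅ :=
  filter_false_of_mem fun i _ => (h i).not_gt

theorem filter_lt_eq_univ_of_forall_lt (h : ∀ i, a i < s) :
    ({i | a i < s} : Finset ι) = Finset.univ :=
  filter_true_of_mem fun i _ => h i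

theorem filter_eq_eq_empty_of_forall_gt (h : ∀ i, a i < s) :
    ({i | a i = s} : Finset ι) = ∅ :=
  filter_false_of_mem fun i _ => (h i).ne

end Counting

theorem split_conformalized_limits_general
    {𝓧 : Type*} (m k : ℕ)
    (A : (Fin m → 𝓧 × ℝ) → 𝓧 × ℝ → ℝ)
    (hA_range : ∀ zs z, A zs z ∈ Ioo (0 : ℝ) 1)  -- never takes the values 0 or 1
    (hA_bot : ∀ zs (x : 𝓧), Tendsto (fun y => A zs (x, y)) atBot (nhds 0))
    (hA_top : ∀ zs (x : 𝓧), Tendsto (fun y => A zs (x, y)) atTop (nhds 1))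
    (zs : Fin m → 𝓧 × ℝ)      -- training sequence proper z_1,…,z_m
    (zc : Fin k → 𝓧 × ℝ)      -- calibration sequence z_{m+1},…,z_n (k = n − m)
    (x : 𝓧)
    (C : ℝ → ℝ → ℝ)
    (hC : ∀ y τ, C y τ = (1 / (k + 1 : ℝ)) *
      (((univ.filter fun i => A zs (zc i) < A zs (x, y)).card : ℝ)
        + τ * ((univ.filter fun i => A zs (zc i) = A zs (x, y)).card : ℝ) + τ)) :
    Tendsto (fun y => C y 0) atBot (nhds 0) ∧
      Tendsto (fun y => C y 1) atTop (nhds 1) := by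
  have below : ∀ᶠ y in atBot, ∀ i, A zs (x, y) < A zs (zc i) :=
    eventually_all.2 fun i => (hA_bot zs x).eventually_lt_const (hA_range zs (zc i)).1
  have above : ∀ᶠ y in atTop, ∀ i, A zs (zc i) < A zs (x, y) :=
    eventually_all.2 fun i => (hA_top zs x).eventually_const_lt (hA_range zs (zc i)).2
  constructor
  · refine tendsto_const_nhds.congr' ?_
    filter_upwards [below] with y hy
    rw [hC, filter_lt_eq_empty_of_forall_lt hy]
    simp
  · refine tendsto_const_nhds.congr' ?_
    filter_upwards [above] with y hy
    rw [hC, filter_lt_eq_univ_of_forall_lt hy, filter_eq_eq_empty_of_forall_gt hy]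
    simp only [card_univ, Fintype.card_fin, Finset.card_empty, CharP.cast_eq_zero, one_mul, add_zero]
    field_simp

/-- if the base predictive system `A` never takes the values 0 or 1, then
the split-conformalized predictive system `C^A` satisfies
`lim_{y→−∞} C^A(…,(x,y),0) = 0` and `lim_{y→+∞} C^A(…,(x,y),1) = 1`
for every training sequence and test object. -/
theorem split_conformalized_limits
    {𝓧 : Type*} (m k : ℕ)
    (A : (Fin m → 𝓧 × ℝ) → 𝓧 × ℝ → ℝ)
    (hA_range : ∀ zs z, A zs z ∈ Ioo (0 : ℝ) 1)  -- never takes the values 0 or 1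
    (hA_mono : ∀ zs (x : 𝓧), Monotone fun y => A zs (x, y))
    (hA_bot : ∀ zs (x : 𝓧), Tendsto (fun y => A zs (x, y)) atBot (nhds 0))
    (hA_top : ∀ zs (x : 𝓧), Tendsto (fun y => A zs (x, y)) atTop (nhds 1))
    (zs : Fin m → 𝓧 × ℝ)      -- training sequence proper z_1,…,z_m
    (zc : Fin k → 𝓧 × ℝ)      -- calibration sequence z_{m+1},…,z_n (k = n − m)
    (x : 𝓧)
    (C : ℝ → ℝ → ℝ)
    (hC : ∀ y τ, C y τ = (1 / (k + 1 : ℝ)) *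
      (((univ.filter fun i => A zs (zc i) < A zs (x, y)).card : ℝ)
        + τ * ((univ.filter fun i => A zs (zc i) = A zs (x, y)).card : ℝ) + τ)) :
    Tendsto (fun y => C y 0) atBot (nhds 0) ∧
      Tendsto (fun y => C y 1) atTop (nhds 1) :=
  split_conformalized_limits_general m k A hA_range hA_bot hA_top zs zc x C hC
end

section
/- Let p_1,…,p_{n−m} ∈ [0,1] be calibration scores with distinct sorted values p_(1) < … < p_(k) and multiplicities n_1,…,n_k (so n_1 + … + n_k = n − m). Let f : ℝ → [0,1] be monotonically increasing and define m_j = sup{y : f(y) < p_(j)} and M_j = inf{y : f(y) > p_(j)}. Then m_1 ≤ M_1 ≤ m_2 ≤ M_2 ≤ … ≤ m_k ≤ M_k, and for y outside the finite set {m_j, M_j}: the split-conformal value (1/(n−m+1))[|{i : p_i < f(y)}| + τ|{i : p_i = f(y)}| + τ] equals τ/(n−m+1) if y < m_1; (n_1+…+n_{j−1} + τ n_j + τ)/(n−m+1) if y ∈ (m_j, M_j); (n_1+…+n_j + τ)/(n−m+1) if y ∈ (M_j, m_{j+1}); and (n−m+τ)/(n−m+1) if y > M_k. -/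
/-!
Monotonicity of `f` turns the crossing points `m_j`, `M_j` into a description of `f y` alone:
left of `m_j` we have `f y < q_j`, right of it `q_j ≤ f y`, and symmetrically for `M_j`.
Each open piece of the real line therefore pins `f y` either to one score value `q_j` or
strictly between two consecutive ones (or beyond the extreme ones), and the two counts in the
split-conformal value are then sums of multiplicities over an initial segment of the sorted
score values.
-/

open Set Finset

section Crossing

variable {β : Type*} [LinearOrder β] {f : ℝ → β} {c d : β} {y : ℝ}

/-- `m_j` of the paper, for the level `c = q_j`. -/
noncomputable def lowerCrossing (f : ℝ → β) (c : β) : EReal :=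
  sSup ((↑) '' {y | f y < c})

/-- `M_j` of the paper, for the level `c = q_j`. -/
noncomputable def upperCrossing (f : ℝ → β) (c : β) : EReal :=
  sInf ((↑) '' {y | c < f y})

theorem lt_of_coe_lt_lowerCrossing (hf : Monotone f) (hy : (y : EReal) < lowerCrossing f c) :
    f y < c := by
  obtain ⟨_, ⟨y', hy', rfl⟩, hyy'⟩ := lt_sSup_iff.1 hy
  exact (hf (EReal.coe_le_coe_iff.1 hyy'.le)).trans_lt hy'

theorem le_of_lowerCrossing_lt_coe (hy : lowerCrossing f c < y) : c ≤ f y :=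
  not_lt.1 fun hfy => hy.not_ge (le_sSup ⟨y, hfy, rfl⟩)

theorem le_of_coe_lt_upperCrossing (hy : (y : EReal) < upperCrossing f c) : f y ≤ c :=
  not_lt.1 fun hfy => hy.not_ge (sInf_le ⟨y, hfy, rfl⟩)

theorem lt_of_upperCrossing_lt_coe (hf : Monotone f) (hy : upperCrossing f c < y) : c < f y := by
  obtain ⟨_, ⟨y', hy', rfl⟩, hy'y⟩ := sInf_lt_iff.1 hy
  exact hy'.trans_le (hf (EReal.coe_le_coe_iff.1 hy'y.le))

theorem lowerCrossing_le_upperCrossing (hf : Monotone f) (hcd : c ≤ d) :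
    lowerCrossing f c ≤ upperCrossing f d := by
  refine sSup_le ?_
  rintro _ ⟨y₁, hy₁, rfl⟩
  refine le_sInf ?_
  rintro _ ⟨y₂, hy₂, rfl⟩
  exact EReal.coe_le_coe_iff.2 (hf.reflect_lt (hy₁.trans_le hcd |>.trans hy₂)).le

theorem upperCrossing_le_lowerCrossing (hcd : c < d) : upperCrossing f c ≤ lowerCrossing f d := by
  by_contra! h
  obtain ⟨z, hdz, hzc⟩ := EReal.exists_between_coe_real h
  exact hcd.not_ge ((le_of_lowerCrossing_lt_coe hdz).trans (le_of_coe_lt_upperCrossing hzc))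

end Crossing

section Count

variable {ι κ β : Type*} [Fintype ι] [LinearOrder β] {p : ι → β} {q : κ → β}

theorem card_filter_eq_eq_zero (hpq : ∀ i, ∃ l, p i = q l) {x : β} (hx : ∀ l, q l ≠ x) :
    #{i | p i = x} = 0 := by
  refine card_eq_zero.2 (filter_eq_empty_iff.2 fun i _ => ?_)
  obtain ⟨l, hl⟩ := hpq i
  exact hl ▸ hx l

variable [Fintype κ]

theorem card_filter_comp_eq_sum_ite (hq : Function.Injective q) (hpq : ∀ i, ∃ l, p i = q l)
    (P : β → Prop) [DecidablePred P] :
    #{i | P (p i)} = ∑ l, if P (q l) then #{i | p i = q l} else 0 := by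
  classical
  have hfib : ({i | P (p i)} : Finset ι) = ({l | P (q l)} : Finset κ).biUnion
      fun l => {i | p i = q l} := by
    ext i
    obtain ⟨l, hl⟩ := hpq i
    simp only [Finset.mem_filter, Finset.mem_univ, true_and, Finset.mem_biUnion]
    exact ⟨fun h => ⟨l, hl ▸ h, hl⟩, fun ⟨l', hl', hil'⟩ => hil' ▸ hl'⟩
  rw [hfib, card_biUnion, sum_filter]
  intro l _ l' _ hne
  exact disjoint_filter.2 fun i _ h h' => hne (hq (h.symm.trans h'))

theorem sum_card_filter_eq_card (hq : Function.Injective q) (hpq : ∀ i, ∃ l, p i = q l) :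
    ∑ l, #{i | p i = q l} = Fintype.card ι := by
  simpa using (card_filter_comp_eq_sum_ite hq hpq fun _ => True).symm

noncomputable def conformalCount (p : ι → β) (x : β) (τ : ℝ) : ℝ :=
  #{i | p i < x} + τ * #{i | p i = x} + τ

variable [LinearOrder κ] (hq : StrictMono q) (hpq : ∀ i, ∃ l, p i = q l) (τ : ℝ)
include hq hpq

theorem conformalCount_of_forall_lt {x : β} (hx : ∀ l, x < q l) : conformalCount p x τ = τ := by
  have hlt := card_filter_comp_eq_sum_ite hq.injective hpq (· < x)
  simp only [fun l => (hx l).not_gt, if_false, sum_const_zero] at hlt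
  simp [conformalCount, hlt, card_filter_eq_eq_zero hpq fun l => (hx l).ne']

theorem conformalCount_apply (j : κ) :
    conformalCount p (q j) τ
      = (∑ l, if l < j then (#{i | p i = q l} : ℝ) else 0) + τ * #{i | p i = q j} + τ := by
  simp only [conformalCount, card_filter_comp_eq_sum_ite hq.injective hpq (· < q j),
    hq.lt_iff_lt, Nat.cast_sum, Nat.cast_ite, Nat.cast_zero]

theorem conformalCount_of_lt_of_forall_lt {x : β} {j : κ} (hjx : q j < x)
    (hx : ∀ l, j < l → x < q l) :
    conformalCount p x τ = (∑ l, if l ≤ j then (#{i | p i = q l} : ℝ) else 0) + τ := by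
  have hiff : ∀ l, q l < x ↔ l ≤ j := fun l =>
    ⟨fun h => not_lt.1 fun hjl => (hx l hjl).not_gt h, fun h => (hq.monotone h).trans_lt hjx⟩
  have hne : ∀ l, q l ≠ x := fun l => by
    rcases le_or_gt l j with h | h
    · exact ((hiff l).2 h).ne
    · exact (hx l h).ne'
  simp only [conformalCount, card_filter_comp_eq_sum_ite hq.injective hpq (· < x), hiff,
    card_filter_eq_eq_zero hpq hne, Nat.cast_sum, Nat.cast_ite, Nat.cast_zero, mul_zero, add_zero]

theorem conformalCount_of_forall_gt {x : β} (hx : ∀ l, q l < x) :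
    conformalCount p x τ = Fintype.card ι + τ := by
  have hlt := card_filter_comp_eq_sum_ite hq.injective hpq (· < x)
  simp only [hx, if_true, sum_card_filter_eq_card hq.injective hpq] at hlt
  simp [conformalCount, hlt, card_filter_eq_eq_zero hpq fun l => (hx l).ne]

end Count

theorem split_conformal_calibrator_correct_general
    (N k : ℕ) (hk : 0 < k)
    (p : Fin N → ℝ)
    (q : Fin k → ℝ) (hq_mono : StrictMono q)
    (hpq : ∀ i, ∃ j, p i = q j)
    (nmult : Fin k → ℕ)
    (hn : ∀ j, nmult j = (univ.filter fun i => p i = q j).card)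
    (f : ℝ → ℝ) (hf_mono : Monotone f)
    (mj Mj : Fin k → EReal)
    (hmj : ∀ j, mj j = sSup ((fun y : ℝ => (y : EReal)) '' {y | f y < q j}))
    (hMj : ∀ j, Mj j = sInf ((fun y : ℝ => (y : EReal)) '' {y | q j < f y}))
    (C : ℝ → ℝ → ℝ)
    (hC : ∀ y τ, C y τ = (1 / (N + 1 : ℝ)) *
      (((univ.filter fun i => p i < f y).card : ℝ)
        + τ * ((univ.filter fun i => p i = f y).card : ℝ) + τ)) :
    -- interleaving m_1 ≤ M_1 ≤ m_2 ≤ M_2 ≤ … ≤ m_k ≤ M_k: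
    (∀ j, mj j ≤ Mj j) ∧
    (∀ (j : Fin k) (h : (j : ℕ) + 1 < k), Mj j ≤ mj ⟨(j : ℕ) + 1, h⟩) ∧
    -- the piecewise formula:
    (∀ (y τ : ℝ),
      ((y : EReal) < mj ⟨0, hk⟩ → C y τ = τ / (N + 1)) ∧
      (∀ j : Fin k, mj j < (y : EReal) → (y : EReal) < Mj j →
        C y τ = ((∑ l : Fin k, if l < j then (nmult l : ℝ) else 0)
          + τ * (nmult j : ℝ) + τ) / (N + 1)) ∧
      (∀ (j : Fin k) (h : (j : ℕ) + 1 < k),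
        Mj j < (y : EReal) → (y : EReal) < mj ⟨(j : ℕ) + 1, h⟩ →
        C y τ = ((∑ l : Fin k, if l ≤ j then (nmult l : ℝ) else 0) + τ) / (N + 1)) ∧
      (Mj ⟨k - 1, Nat.sub_lt hk one_pos⟩ < (y : EReal) →
        C y τ = ((N : ℝ) + τ) / (N + 1))) := by
  have hm : ∀ j, mj j = lowerCrossing f (q j) := hmj
  have hM : ∀ j, Mj j = upperCrossing f (q j) := hMj
  have hCount : ∀ y τ, C y τ = conformalCount p (f y) τ / (N + 1) := fun y τ => by
    rw [hC, one_div_mul_eq_div, conformalCount]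
  simp only [hm, hM, hCount, hn]
  refine ⟨fun j => lowerCrossing_le_upperCrossing hf_mono le_rfl,
    fun j h => upperCrossing_le_lowerCrossing (hq_mono (Nat.lt_succ_self j)),
    fun y τ => ⟨fun hy => ?_, fun j hmy hyM => ?_, fun j h hMy hym => ?_, fun hy => ?_⟩⟩
  · have hfy := lt_of_coe_lt_lowerCrossing hf_mono hy
    rw [conformalCount_of_forall_lt hq_mono hpq τ fun l =>
      hfy.trans_le (hq_mono.monotone (Nat.zero_le l))]
  · have hfy : f y = q j :=
      (le_of_coe_lt_upperCrossing hyM).antisymm (le_of_lowerCrossing_lt_coe hmy)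
    rw [hfy, conformalCount_apply hq_mono hpq]
  · rw [conformalCount_of_lt_of_forall_lt hq_mono hpq τ (lt_of_upperCrossing_lt_coe hf_mono hMy)
      fun l hjl => (lt_of_coe_lt_lowerCrossing hf_mono hym).trans_le (hq_mono.monotone hjl)]
  · have hfy := lt_of_upperCrossing_lt_coe hf_mono hy
    rw [conformalCount_of_forall_gt hq_mono hpq τ fun l =>
      (hq_mono.monotone (Nat.le_sub_one_of_lt l.isLt)).trans_lt hfy, Fintype.card_fin]

/-- correctness of the Split-Conformal Calibrator (Algorithm 1).
`p_1,…,p_N ∈ [0,1]` are the calibration scores, with distinct sorted values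
`q_1 < … < q_k` of multiplicities `n_1,…,n_k`; `f : ℝ → [0,1]` is the (monotone) base
predictive distribution function for the test object;
`m_j = sup {y : f y < q_j}` and `M_j = inf {y : f y > q_j}` (computed in `EReal` so
that `±∞` are allowed). Then `m_1 ≤ M_1 ≤ m_2 ≤ M_2 ≤ … ≤ m_k ≤ M_k`, and outside the
finite set `{m_j, M_j}` the split-conformal value
`(|{i : p_i < f y}| + τ|{i : p_i = f y}| + τ)/(N+1)` is given by the piecewise
formula (2) of the paper. -/
theorem split_conformal_calibrator_correct
    (N k : ℕ) (hk : 0 < k)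
    (p : Fin N → ℝ) (hp_range : ∀ i, p i ∈ Icc (0 : ℝ) 1)
    (q : Fin k → ℝ) (hq_mono : StrictMono q)
    (hpq : ∀ i, ∃ j, p i = q j) (hqp : ∀ j, ∃ i, p i = q j)
    (nmult : Fin k → ℕ)
    (hn : ∀ j, nmult j = (univ.filter fun i => p i = q j).card)
    (f : ℝ → ℝ) (hf_range : ∀ y, f y ∈ Icc (0 : ℝ) 1) (hf_mono : Monotone f)
    (mj Mj : Fin k → EReal)
    (hmj : ∀ j, mj j = sSup ((fun y : ℝ => (y : EReal)) '' {y | f y < q j}))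
    (hMj : ∀ j, Mj j = sInf ((fun y : ℝ => (y : EReal)) '' {y | q j < f y}))
    (C : ℝ → ℝ → ℝ)
    (hC : ∀ y τ, C y τ = (1 / (N + 1 : ℝ)) *
      (((univ.filter fun i => p i < f y).card : ℝ)
        + τ * ((univ.filter fun i => p i = f y).card : ℝ) + τ)) :
    -- interleaving m_1 ≤ M_1 ≤ m_2 ≤ M_2 ≤ … ≤ m_k ≤ M_k:
    (∀ j, mj j ≤ Mj j) ∧
    (∀ (j : Fin k) (h : (j : ℕ) + 1 < k), Mj j ≤ mj ⟨(j : ℕ) + 1, h⟩) ∧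
    -- the piecewise formula:
    (∀ (y τ : ℝ),
      ((y : EReal) < mj ⟨0, hk⟩ → C y τ = τ / (N + 1)) ∧
      (∀ j : Fin k, mj j < (y : EReal) → (y : EReal) < Mj j →
        C y τ = ((∑ l : Fin k, if l < j then (nmult l : ℝ) else 0)
          + τ * (nmult j : ℝ) + τ) / (N + 1)) ∧
      (∀ (j : Fin k) (h : (j : ℕ) + 1 < k),
        Mj j < (y : EReal) → (y : EReal) < mj ⟨(j : ℕ) + 1, h⟩ →
        C y τ = ((∑ l : Fin k, if l ≤ j then (nmult l : ℝ) else 0) + τ) / (N + 1)) ∧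
      (Mj ⟨k - 1, Nat.sub_lt hk one_pos⟩ < (y : EReal) →
        C y τ = ((N : ℝ) + τ) / (N + 1))) :=
  split_conformal_calibrator_correct_general N k hk p q hq_mono hpq nmult hn f hf_mono mj Mj hmj hMj
    C hC
end
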